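/- Let x_1, …, x_n be pairwise distinct real numbers in [−1, 1], and let b : ℕ → ℝ satisfy b_k > 0 for every k and Σ_{k=0}^∞ b_k < ∞. Then the n×n matrix H with entries H_{ij} = Σ_{k=0}^∞ b_k (x_i x_j)^k is positive definite (in particular nonsingular). -/

import Mathlib

open Matrix

/-!
Writing `H = ∑ₖ bₖ vₖ vₖᵀ` with `vₖ = (x₁ᵏ, …, xₙᵏ)`, the quadratic form of `H` at `c` is
`∑ₖ bₖ ⟨c, vₖ⟩²`, a convergent series of nonnegative terms because `|xᵢ xⱼ| ≤ 1`. It vanishes only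
if `⟨c, vₖ⟩ = 0` for every `k < n`, i.e. if the transposed Vandermonde matrix of the distinct
nodes `xᵢ` kills `c`, which forces `c = 0`.
-/

lemma summable_mul_pow_of_abs_le_one {b : ℕ → ℝ} (hb : Summable b) (hb0 : ∀ k, 0 ≤ b k)
    {y : ℝ} (hy : |y| ≤ 1) : Summable fun k => b k * y ^ k :=
  hb.of_norm_bounded fun k => by
    rw [Real.norm_eq_abs, abs_mul, abs_pow, abs_of_nonneg (hb0 k)]
    exact mul_le_of_le_one_right (hb0 k) (pow_le_one₀ (abs_nonneg y) hy)

lemma hasSum_dotProduct_mulVec_of_tsum {β ι : Type*} [Fintype ι] {f : β → ι → ι → ℝ}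
    (hf : ∀ i j, Summable fun k => f k i j) (c : ι → ℝ) :
    HasSum (fun k => c ⬝ᵥ (of (f k) *ᵥ c)) (c ⬝ᵥ (of (fun i j => ∑' k, f k i j) *ᵥ c)) := by
  simp only [dotProduct, mulVec, of_apply]
  exact hasSum_sum fun i _ => (hasSum_sum fun j _ => (hf i j).hasSum.mul_right (c j)).mul_left (c i)

lemma dotProduct_mulVec_of_mul_pow {ι : Type*} [Fintype ι] (a : ℝ) (x c : ι → ℝ) (k : ℕ) :
    c ⬝ᵥ (of (fun i j => a * (x i * x j) ^ k) *ᵥ c) = a * (∑ i, c i * x i ^ k) ^ 2 := by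
  simp only [dotProduct, mulVec, of_apply, Finset.mul_sum]
  rw [sq, Finset.sum_mul_sum, Finset.mul_sum]
  refine Finset.sum_congr rfl fun i _ => ?_
  rw [Finset.mul_sum]
  exact Finset.sum_congr rfl fun j _ => by ring

theorem stmt1 (n : ℕ) (x : Fin n → ℝ)
    (hx_mem : ∀ i, x i ∈ Set.Icc (-1 : ℝ) 1)
    (hx_distinct : Function.Injective x)
    (b : ℕ → ℝ) (hb_pos : ∀ k, 0 < b k) (hb_sum : Summable b) :
    (Matrix.of fun i j : Fin n => ∑' k : ℕ, b k * (x i * x j) ^ k).PosDef := by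
  refine .of_dotProduct_mulVec_pos ?_ fun c hc => ?_
  · ext i j
    simp [mul_comm]
  have hxx (i j : Fin n) : |x i * x j| ≤ 1 := by
    rw [abs_mul]
    exact mul_le_one₀ (abs_le.2 (hx_mem i)) (abs_nonneg _) (abs_le.2 (hx_mem j))
  have hH := hasSum_dotProduct_mulVec_of_tsum
    (fun i j => summable_mul_pow_of_abs_le_one hb_sum (fun k => (hb_pos k).le) (hxx i j)) c
  simp only [dotProduct_mulVec_of_mul_pow] at hH
  obtain ⟨k, hk⟩ : ∃ k : Fin n, ∑ i, c i * x i ^ (k : ℕ) ≠ 0 := by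
    by_contra! h
    exact hc (eq_zero_of_forall_pow_sum_mul_pow_eq_zero hx_distinct h)
  rw [star_trivial, ← hH.tsum_eq]
  exact hH.summable.tsum_pos (fun k => mul_nonneg (hb_pos k).le (sq_nonneg _)) k
    (mul_pos (hb_pos k) (pow_two_pos_of_ne_zero hk))
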